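/- arXiv:2007.10810 — 2 statements merged into one kernel-verified Lean document; each statement's English description precedes it below -/
import Mathlib

section
/- In a pentagonal geometry PENT(3,r), the number of opposite line pairs is at most (r+2)/3 if r ≡ 1 (mod 3), and at most (r-3)/3 if r ≡ 0 (mod 3). -/
open scoped Classical

/-- A pentagonal geometry PENT(k,r). -/
structure PentGeom (V : Type) [Fintype V] [DecidableEq V] (k r : ℕ) : Type where
  lines : Finset (Finset V)
  size_pos : 2 ≤ k
  rep_pos : 1 ≤ r
  pairwise : ∀ x y : V, x ≠ y → (lines.filter (fun l => x ∈ l ∧ y ∈ l)).card ≤ 1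
  uniform : ∀ l ∈ lines, l.card = k
  regular : ∀ x : V, (lines.filter (fun l => x ∈ l)).card = r
  opp : ∀ x : V,
    (Finset.univ.filter (fun y => y ≠ x ∧ ∀ l ∈ lines, ¬(x ∈ l ∧ y ∈ l))) ∈ lines

variable {V : Type} [Fintype V] [DecidableEq V] {k r : ℕ}

/-- The opposite line of a point. -/
def PentGeom.oppLine (P : PentGeom V k r) (x : V) : Finset V :=
  Finset.univ.filter (fun y => y ≠ x ∧ ∀ l ∈ P.lines, ¬(x ∈ l ∧ y ∈ l))

/-- Two points are collinear if some line contains both. -/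
def PentGeom.Collinear (P : PentGeom V k r) (x y : V) : Prop :=
  x ≠ y ∧ ∃ l ∈ P.lines, x ∈ l ∧ y ∈ l

/-- An opposite line pair. -/
def PentGeom.OppPair (P : PentGeom V k r) (l m : Finset V) : Prop :=
  l ∈ P.lines ∧ m ∈ P.lines ∧ l ≠ m ∧
    (∀ x ∈ l, P.oppLine x = m) ∧ (∀ y ∈ m, P.oppLine y = l)

/-- The finset of ordered opposite line pairs; its cardinality is twice the number of
(unordered) opposite line pairs. -/
noncomputable def PentGeom.olpOrdered (P : PentGeom V k r) : Finset (Finset V × Finset V) :=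
  (P.lines ×ˢ P.lines).filter (fun p => P.OppPair p.1 p.2)

/-!
Every point x lies on r lines of size k, so v = 1 + r(k-1) + k (x, its collinear points, and
its opposite line). The q opposite line pairs cover 2qk points disjointly, so 2qk ≤ v; for
k = 3 this is the bound when r ≡ 1 (mod 3). When r = 3s it only gives q ≤ s, and q = s would
leave exactly 4 = k + 1 uncovered points. But the uncovered points are closed under taking
opposite lines, and a nonempty closed set of k + 1 points would be a point together with its
opposite line, in which two points of that line would have to be opposite to each other.
-/

namespace PentGeom

variable (P : PentGeom V k r)

lemma mem_oppLine {x y : V} :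
    y ∈ P.oppLine x ↔ y ≠ x ∧ ∀ l ∈ P.lines, ¬(x ∈ l ∧ y ∈ l) := by
  simp [oppLine]

lemma oppLine_mem_lines (x : V) : P.oppLine x ∈ P.lines := P.opp x

lemma card_oppLine (x : V) : (P.oppLine x).card = k := P.uniform _ (P.oppLine_mem_lines x)

lemma mem_oppLine_comm {x y : V} : y ∈ P.oppLine x ↔ x ∈ P.oppLine y := by
  simp only [mem_oppLine]
  exact ⟨fun h => ⟨h.1.symm, fun l hl hc => h.2 l hl hc.symm⟩,
    fun h => ⟨h.1.symm, fun l hl hc => h.2 l hl hc.symm⟩⟩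

lemma nonempty_of_mem_lines {l : Finset V} (hl : l ∈ P.lines) : l.Nonempty := by
  rw [← Finset.card_pos, P.uniform l hl]
  have := P.size_pos
  omega

lemma not_collinear_of_mem_oppLine {x y : V} (h : y ∈ P.oppLine x) {l : Finset V}
    (hl : l ∈ P.lines) (hx : x ∈ l) : y ∉ l :=
  fun hy => ((P.mem_oppLine).1 h).2 l hl ⟨hx, hy⟩

lemma eq_of_mem_of_mem_lines {x y : V} (hxy : x ≠ y) {l l' : Finset V}
    (hl : l ∈ P.lines) (hl' : l' ∈ P.lines) (hx : x ∈ l) (hy : y ∈ l) (hx' : x ∈ l')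
    (hy' : y ∈ l') : l = l' := by
  have hsub : {l, l'} ⊆ P.lines.filter (fun t => x ∈ t ∧ y ∈ t) := by
    intro t ht
    rcases Finset.mem_insert.1 ht with rfl | ht
    · exact Finset.mem_filter.2 ⟨hl, hx, hy⟩
    · rw [Finset.mem_singleton.1 ht]
      exact Finset.mem_filter.2 ⟨hl', hx', hy'⟩
  by_contra hne
  have := (Finset.card_le_card hsub).trans (P.pairwise x y hxy)
  rw [Finset.card_pair hne] at this
  omega

def collinearPts (x : V) : Finset V :=
  (P.lines.filter (fun l => x ∈ l)).biUnion (fun l => l.erase x)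

lemma card_collinearPts (x : V) : (P.collinearPts x).card = r * (k - 1) := by
  rw [collinearPts, Finset.card_biUnion]
  · rw [Finset.sum_congr rfl (g := fun _ => k - 1), Finset.sum_const, smul_eq_mul,
      P.regular]
    intro l hl
    obtain ⟨hl, hxl⟩ := Finset.mem_filter.1 hl
    rw [Finset.card_erase_of_mem hxl, P.uniform l hl]
  · intro l hl l' hl' hne
    obtain ⟨hl, hxl⟩ := Finset.mem_filter.1 hl
    obtain ⟨hl', hxl'⟩ := Finset.mem_filter.1 hl'
    refine Finset.disjoint_left.2 fun y hy hy' => hne ?_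
    exact P.eq_of_mem_of_mem_lines (Finset.ne_of_mem_erase hy).symm hl hl' hxl
      (Finset.mem_of_mem_erase hy) hxl' (Finset.mem_of_mem_erase hy')

lemma card_univ_eq (P : PentGeom V k r) [Nonempty V] : Fintype.card V = r * (k - 1) + k + 1 := by
  obtain ⟨x⟩ := ‹Nonempty V›
  have huniv : (Finset.univ : Finset V) = insert x (P.collinearPts x ∪ P.oppLine x) := by
    ext y
    simp only [Finset.mem_univ, Finset.mem_insert, Finset.mem_union, collinearPts,
      Finset.mem_biUnion, Finset.mem_filter, Finset.mem_erase, mem_oppLine, true_iff]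
    by_cases hyx : y = x
    · exact Or.inl hyx
    · by_cases hcol : ∃ l ∈ P.lines, x ∈ l ∧ y ∈ l
      · obtain ⟨l, hl, hxl, hyl⟩ := hcol
        exact Or.inr (Or.inl ⟨l, ⟨hl, hxl⟩, hyx, hyl⟩)
      · exact Or.inr (Or.inr ⟨hyx, fun l hl hc => hcol ⟨l, hl, hc⟩⟩)
  have hdisj : Disjoint (P.collinearPts x) (P.oppLine x) := by
    refine Finset.disjoint_left.2 fun y hy hy' => ?_
    obtain ⟨l, hl, hyl⟩ := Finset.mem_biUnion.1 hy
    obtain ⟨hl, hxl⟩ := Finset.mem_filter.1 hl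
    exact P.not_collinear_of_mem_oppLine hy' hl hxl (Finset.mem_of_mem_erase hyl)
  have hx : x ∉ P.collinearPts x ∪ P.oppLine x := by
    simp [collinearPts, mem_oppLine]
  rw [← Finset.card_univ, huniv, Finset.card_insert_of_notMem hx,
    Finset.card_union_of_disjoint hdisj, card_collinearPts, card_oppLine]

lemma add_one_lt_card_of_oppLine_subset {S : Finset V} (hS : S.Nonempty)
    (hclosed : ∀ x ∈ S, P.oppLine x ⊆ S) : k + 1 < S.card := by
  obtain ⟨y, hy⟩ := hS
  have hsub : insert y (P.oppLine y) ⊆ S := Finset.insert_subset hy (hclosed y hy)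
  have hle := Finset.card_le_card hsub
  rw [Finset.card_insert_of_notMem (by simp [mem_oppLine]), card_oppLine] at hle
  refine lt_of_le_of_ne hle fun hcard => ?_
  obtain ⟨a, ha, b, hb, hab⟩ := Finset.one_lt_card.1
    (show 1 < (P.oppLine y).card by rw [card_oppLine]; have := P.size_pos; omega)
  have haS : a ∈ S := hsub (Finset.mem_insert_of_mem ha)
  have hopp : P.oppLine a = S.erase a := by
    refine Finset.eq_of_subset_of_card_le (fun z hz => Finset.mem_erase.2
      ⟨((P.mem_oppLine).1 hz).1, hclosed a haS hz⟩) ?_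
    rw [Finset.card_erase_of_mem haS, ← hcard, card_oppLine, Nat.add_sub_cancel]
  have hba : b ∈ P.oppLine a :=
    hopp ▸ Finset.mem_erase.2 ⟨hab.symm, hsub (Finset.mem_insert_of_mem hb)⟩
  exact P.not_collinear_of_mem_oppLine hba (P.oppLine_mem_lines y) ha hb

lemma OppPair.symm {l m : Finset V} (h : P.OppPair l m) : P.OppPair m l :=
  ⟨h.2.1, h.1, h.2.2.1.symm, h.2.2.2.2, h.2.2.2.1⟩

lemma OppPair.eq_of_mem {l m l' m' : Finset V} (h : P.OppPair l m) (h' : P.OppPair l' m')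
    {x : V} (hx : x ∈ l) (hx' : x ∈ l') : l = l' ∧ m = m' := by
  have hm : m = m' := by rw [← h.2.2.2.1 x hx, h'.2.2.2.1 x hx']
  subst hm
  obtain ⟨y, hy⟩ := P.nonempty_of_mem_lines h.2.1
  exact ⟨by rw [← h.2.2.2.2 y hy, h'.2.2.2.2 y hy], rfl⟩

lemma mem_olpOrdered {p : Finset V × Finset V} : p ∈ P.olpOrdered ↔ P.OppPair p.1 p.2 := by
  simp only [olpOrdered, Finset.mem_filter, Finset.mem_product, and_iff_right_iff_imp]
  exact fun h => ⟨h.1, h.2.1⟩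

lemma even_card_olpOrdered : Even P.olpOrdered.card := by
  rw [← ZMod.natCast_eq_zero_iff_even, Finset.card_eq_sum_ones, Nat.cast_sum, Nat.cast_one]
  refine Finset.sum_involution (fun p _ => p.swap) (fun _ _ => by decide)
    (fun p hp _ h => ((P.mem_olpOrdered).1 hp).2.2.1 (congrArg Prod.fst h).symm)
    (fun p hp => (P.mem_olpOrdered).2 (OppPair.symm P ((P.mem_olpOrdered).1 hp)))
    (fun p _ => p.swap_swap)

noncomputable def pairedPts : Finset V := P.olpOrdered.biUnion Prod.fst

lemma card_pairedPts : P.pairedPts.card = k * P.olpOrdered.card := by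
  rw [pairedPts, Finset.card_biUnion, Finset.sum_congr rfl (g := fun _ => k), Finset.sum_const,
    smul_eq_mul, mul_comm]
  · exact fun p hp => P.uniform _ ((P.mem_olpOrdered).1 hp).1
  · intro p hp p' hp' hne
    refine Finset.disjoint_left.2 fun x hx hx' => hne ?_
    obtain ⟨h1, h2⟩ :=
      OppPair.eq_of_mem P ((P.mem_olpOrdered).1 hp) ((P.mem_olpOrdered).1 hp') hx hx'
    exact Prod.ext h1 h2

lemma oppLine_subset_compl_pairedPts {x : V} (hx : x ∈ P.pairedPtsᶜ) :
    P.oppLine x ⊆ P.pairedPtsᶜ := by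
  intro y hy
  simp only [Finset.mem_compl, pairedPts, Finset.mem_biUnion] at hx ⊢
  rintro ⟨⟨l, m⟩, hp, hyl⟩
  have hp : P.OppPair l m := (P.mem_olpOrdered).1 hp
  have hxm : x ∈ m := by
    rw [← hp.2.2.2.1 y hyl]
    exact (P.mem_oppLine_comm).1 hy
  exact hx ⟨(m, l), (P.mem_olpOrdered).2 (OppPair.symm P hp), hxm⟩

lemma compl_pairedPts_eq_empty_or_card_gt :
    P.pairedPtsᶜ = ∅ ∨ k + 1 < P.pairedPtsᶜ.card :=
  (Finset.eq_empty_or_nonempty _).imp_right fun h =>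
    P.add_one_lt_card_of_oppLine_subset h fun _ => P.oppLine_subset_compl_pairedPts

end PentGeom

/-- In a PENT(3,r) the number q of opposite line pairs satisfies
q ≤ (r+2)/3 if r ≡ 1 (mod 3) and q ≤ (r-3)/3 if r ≡ 0 (mod 3).  Here `olpOrdered.card`
is 2q, so the bounds read 3·(2q) ≤ 2(r+2) and 3·(2q) ≤ 2(r-3) respectively. -/
theorem stmt8 (r : ℕ) (V : Type) [Fintype V] [DecidableEq V] (P : PentGeom V 3 r) :
    (r % 3 = 1 → 3 * P.olpOrdered.card ≤ 2 * (r + 2)) ∧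
    (r % 3 = 0 → 3 * P.olpOrdered.card ≤ 2 * (r - 3)) := by
  have hsplit : P.pairedPtsᶜ.card + 3 * P.olpOrdered.card = Fintype.card V := by
    rw [← P.card_pairedPts, Finset.card_compl_add_card]
  obtain ⟨q, hq⟩ := P.even_card_olpOrdered
  rcases isEmpty_or_nonempty V with hV | hV
  · rw [Fintype.card_eq_zero] at hsplit
    omega
  have hv := P.card_univ_eq
  rcases P.compl_pairedPts_eq_empty_or_card_gt with h | h
  · rw [h, Finset.card_empty] at hsplit
    omega
  · omega
end

section
/- Suppose a pentagonal geometry PENT(3,r) has exactly two opposite line pairs, with the 6 points of the two lines of one pair called type A, the 6 points of the other pair type B, and the remaining 2(r-4) points type C. Then the number of lines containing one point of each type A, B, C is 36, the number of lines of type ACC equals the number of type BCC and both equal 6(r-7), and the number of lines with all three points of type C is (2r² - 32r + 132)/3. -/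
open scoped Classical

variable {V : Type} [Fintype V] [DecidableEq V] {k r : ℕ}

lemma mem_oppLine_iff (P : PentGeom V k r) {x y : V} :
    y ∈ P.oppLine x ↔ y ≠ x ∧ ∀ l ∈ P.lines, ¬(x ∈ l ∧ y ∈ l) := by
  simp [PentGeom.oppLine]

lemma oppLine_mem (P : PentGeom V k r) (x : V) : P.oppLine x ∈ P.lines := P.opp x

lemma not_mem_oppLine_self (P : PentGeom V k r) (x : V) : x ∉ P.oppLine x := by
  simp [mem_oppLine_iff]

lemma line_unique (P : PentGeom V k r) {x y : V} {t t' : Finset V} (hxy : x ≠ y)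
    (ht : t ∈ P.lines) (ht' : t' ∈ P.lines) (hx : x ∈ t) (hy : y ∈ t)
    (hx' : x ∈ t') (hy' : y ∈ t') : t = t' := by
  have h := P.pairwise x y hxy
  have h1 : t ∈ P.lines.filter (fun l => x ∈ l ∧ y ∈ l) := by
    simp [Finset.mem_filter, ht, hx, hy]
  have h2 : t' ∈ P.lines.filter (fun l => x ∈ l ∧ y ∈ l) := by
    simp [Finset.mem_filter, ht', hx', hy']
  by_contra hne
  have := Finset.one_lt_card.2 ⟨t, h1, t', h2, hne⟩
  omega

lemma exists_line (P : PentGeom V k r) {x y : V} (hxy : y ≠ x) (h : y ∉ P.oppLine x) :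
    ∃ t ∈ P.lines, x ∈ t ∧ y ∈ t := by
  rw [mem_oppLine_iff] at h
  push_neg at h
  obtain ⟨t, ht, hmem⟩ := h hxy
  exact ⟨t, ht, hmem⟩

lemma pair_card_one (P : PentGeom V k r) {x y : V} (hxy : y ≠ x) (h : y ∉ P.oppLine x) :
    (P.lines.filter (fun t => x ∈ t ∧ y ∈ t)).card = 1 := by
  obtain ⟨t, ht, hx, hy⟩ := exists_line P hxy h
  refine le_antisymm (P.pairwise x y hxy.symm) ?_
  exact Finset.card_pos.2 ⟨t, by simp [Finset.mem_filter, ht, hx, hy]⟩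

/-- card of universe: 2r + k + 1 given a point exists (we only need k = 3). -/
lemma card_univ_pent (P : PentGeom V 3 r) (x : V) :
    (Finset.univ : Finset V).card = 2 * r + 4 := by
  classical
  set T := P.lines.filter (fun l => x ∈ l) with hT
  have hTcard : T.card = r := P.regular x
  -- erased lines are pairwise disjoint
  have hdisj : ∀ t ∈ T, ∀ t' ∈ T, t ≠ t' → Disjoint (t.erase x) (t'.erase x) := by
    intro t ht t' ht' hne
    rw [Finset.disjoint_left]
    intro y hy hy'
    have hyx : y ≠ x := Finset.ne_of_mem_erase hy
    have ht1 := (Finset.mem_filter.1 ht)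
    have ht2 := (Finset.mem_filter.1 ht')
    exact hne (line_unique P hyx.symm ht1.1 ht2.1 ht1.2 (Finset.mem_of_mem_erase hy)
      ht2.2 (Finset.mem_of_mem_erase hy'))
  have hbU : (T.biUnion (fun t => t.erase x)).card = 2 * r := by
    rw [Finset.card_biUnion hdisj]
    have : ∀ t ∈ T, (t.erase x).card = 2 := by
      intro t ht
      have h1 := Finset.mem_filter.1 ht
      rw [Finset.card_erase_of_mem h1.2, P.uniform t h1.1]
    rw [Finset.sum_congr rfl this, Finset.sum_const, hTcard]
    ring
  have hxnot : x ∉ T.biUnion (fun t => t.erase x) := by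
    simp
  have hsplit : (insert x (T.biUnion (fun t => t.erase x))) ∪ P.oppLine x
      = (Finset.univ : Finset V) := by
    apply Finset.eq_univ_of_forall
    · intro y
      by_cases hyx : y = x
      · simp [hyx]
      by_cases hyo : y ∈ P.oppLine x
      · simp [hyo]
      · obtain ⟨t, ht, hxt, hyt⟩ := exists_line P hyx hyo
        simp only [Finset.mem_union, Finset.mem_insert, Finset.mem_biUnion]
        exact Or.inl (Or.inr ⟨t, Finset.mem_filter.2 ⟨ht, hxt⟩, Finset.mem_erase.2 ⟨hyx, hyt⟩⟩)
  have hdisj2 : Disjoint (insert x (T.biUnion (fun t => t.erase x))) (P.oppLine x) := by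
    rw [Finset.disjoint_left]
    intro y hy hyo
    rcases Finset.mem_insert.1 hy with h | h
    · exact not_mem_oppLine_self P x (h ▸ hyo)
    · obtain ⟨t, ht, hyt⟩ := Finset.mem_biUnion.1 h
      have h1 := Finset.mem_filter.1 ht
      exact (mem_oppLine_iff P |>.1 hyo).2 t h1.1 ⟨h1.2, Finset.mem_of_mem_erase hyt⟩
  rw [← hsplit, Finset.card_union_of_disjoint hdisj2, Finset.card_insert_of_notMem hxnot,
    hbU, P.uniform _ (oppLine_mem P x)]

lemma oppPair_swap {P : PentGeom V k r} {l m : Finset V}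
    (h : P.OppPair l m) : P.OppPair m l :=
  ⟨h.2.1, h.1, h.2.2.1.symm, h.2.2.2.2, h.2.2.2.1⟩

lemma oppPair_disjoint_self {P : PentGeom V k r} {l m : Finset V}
    (h : P.OppPair l m) : Disjoint l m := by
  rw [Finset.disjoint_left]
  intro x hx hx'
  have := h.2.2.2.1 x hx
  exact not_mem_oppLine_self P x (by rw [this]; exact hx')

lemma oppPair_eq_of_mem {P : PentGeom V k r} {l m l' m' : Finset V}
    (h : P.OppPair l m) (h' : P.OppPair l' m') {x : V} (hx : x ∈ l) (hx' : x ∈ l') :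
    ({l, m} : Finset (Finset V)) = {l', m'} := by
  have hm : m = m' := by
    rw [← h.2.2.2.1 x hx, ← h'.2.2.2.1 x hx']
  have hmne : m.Nonempty := by
    rw [← Finset.card_pos, P.uniform m h.2.1]
    have := P.size_pos; omega
  obtain ⟨y, hy⟩ := hmne
  have hl : l = l' := by
    rw [← h.2.2.2.2 y hy, ← h'.2.2.2.2 y (hm ▸ hy)]
  rw [hl, hm]

lemma two_points_line {P : PentGeom V k r} {l m : Finset V}
    (h : P.OppPair l m) {t : Finset V} {x y : V} (ht : t ∈ P.lines) (hxy : x ≠ y)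
    (hx : x ∈ t) (hy : y ∈ t) (hxA : x ∈ l ∪ m) (hyA : y ∈ l ∪ m) : t = l ∨ t = m := by
  obtain ⟨hl, hm, _, ho1, ho2⟩ := h
  rcases Finset.mem_union.1 hxA with hxl | hxm <;>
    rcases Finset.mem_union.1 hyA with hyl | hym
  · exact Or.inl (line_unique P hxy ht hl hx hy hxl hyl)
  · exfalso
    have : y ∈ P.oppLine x := by rw [ho1 x hxl]; exact hym
    exact (mem_oppLine_iff P |>.1 this).2 t ht ⟨hx, hy⟩
  · exfalso
    have : y ∈ P.oppLine x := by rw [ho2 x hxm]; exact hyl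
    exact (mem_oppLine_iff P |>.1 this).2 t ht ⟨hx, hy⟩
  · exact Or.inr (line_unique P hxy ht hm hx hy hxm hym)

lemma oppPair_disjoint {P : PentGeom V k r} {l m l' m' : Finset V}
    (h : P.OppPair l m) (h' : P.OppPair l' m')
    (hne : ({l, m} : Finset (Finset V)) ≠ {l', m'}) :
    Disjoint (l ∪ m) (l' ∪ m') := by
  rw [Finset.disjoint_left]
  intro x hx hx'
  apply hne
  rcases Finset.mem_union.1 hx with h1 | h1 <;> rcases Finset.mem_union.1 hx' with h2 | h2
  · exact oppPair_eq_of_mem h h' h1 h2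
  · rw [oppPair_eq_of_mem h (oppPair_swap h') h1 h2, Finset.pair_comm]
  · rw [← Finset.pair_comm, oppPair_eq_of_mem (oppPair_swap h) h' h1 h2]
  · rw [← Finset.pair_comm, oppPair_eq_of_mem (oppPair_swap h) (oppPair_swap h') h1 h2,
      Finset.pair_comm]

lemma oppLine_subset {P : PentGeom V k r} {l m : Finset V}
    (h : P.OppPair l m) {x : V} (hx : x ∈ l ∪ m) : P.oppLine x ⊆ l ∪ m := by
  rcases Finset.mem_union.1 hx with h1 | h1
  · rw [h.2.2.2.1 x h1]; exact Finset.subset_union_right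
  · rw [h.2.2.2.2 x h1]; exact Finset.subset_union_left

lemma sum_inter_card (P : PentGeom V k r) (A : Finset V) :
    ∑ t ∈ P.lines, (t ∩ A).card = A.card * r := by
  have h1 : ∀ t : Finset V, (t ∩ A).card = ∑ a ∈ A, if a ∈ t then 1 else 0 := by
    intro t
    rw [Finset.inter_comm, ← Finset.filter_mem_eq_inter, Finset.card_filter]
  calc ∑ t ∈ P.lines, (t ∩ A).card
      = ∑ t ∈ P.lines, ∑ a ∈ A, if a ∈ t then 1 else 0 := Finset.sum_congr rfl fun t _ => h1 t
    _ = ∑ a ∈ A, ∑ t ∈ P.lines, if a ∈ t then 1 else 0 := Finset.sum_comm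
    _ = ∑ a ∈ A, r := by
        refine Finset.sum_congr rfl fun a _ => ?_
        rw [← Finset.card_filter]
        exact P.regular a
    _ = A.card * r := by rw [Finset.sum_const, smul_eq_mul]

lemma sum_inter_mul (P : PentGeom V k r) (A B : Finset V)
    (hAB : ∀ a ∈ A, ∀ b ∈ B, (P.lines.filter (fun t => a ∈ t ∧ b ∈ t)).card = 1) :
    ∑ t ∈ P.lines, (t ∩ A).card * (t ∩ B).card = A.card * B.card := by
  have h1 : ∀ (t : Finset V) (A : Finset V),
      (t ∩ A).card = ∑ a ∈ A, if a ∈ t then 1 else 0 := by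
    intro t A
    rw [Finset.inter_comm, ← Finset.filter_mem_eq_inter, Finset.card_filter]
  calc ∑ t ∈ P.lines, (t ∩ A).card * (t ∩ B).card
      = ∑ t ∈ P.lines, ∑ a ∈ A, ∑ b ∈ B, if a ∈ t ∧ b ∈ t then 1 else 0 := by
        refine Finset.sum_congr rfl fun t _ => ?_
        rw [h1 t A, h1 t B, Finset.sum_mul_sum]
        refine Finset.sum_congr rfl fun a _ => Finset.sum_congr rfl fun b _ => ?_
        split_ifs <;> simp_all
    _ = ∑ a ∈ A, ∑ b ∈ B, ∑ t ∈ P.lines, if a ∈ t ∧ b ∈ t then 1 else 0 := by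
        rw [Finset.sum_comm]
        exact Finset.sum_congr rfl fun a _ => Finset.sum_comm
    _ = ∑ a ∈ A, ∑ b ∈ B, 1 := by
        refine Finset.sum_congr rfl fun a ha => Finset.sum_congr rfl fun b hb => ?_
        rw [← Finset.card_filter]
        exact hAB a ha b hb
    _ = A.card * B.card := by simp [mul_comm]


set_option maxHeartbeats 1600000 in
/-- in a PENT(3,r) with exactly two opposite line pairs (type A points: the
first pair, type B: the second, type C: the rest), there are 36 lines of type ABC, the
numbers of ACC and BCC lines are equal and both are 6(r-7), and the number of CCC lines is
(2r² - 32r + 132)/3.  (Stated additively to avoid truncated subtraction/division.) -/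
theorem stmt10 (r : ℕ) (V : Type) [Fintype V] [DecidableEq V] (P : PentGeom V 3 r)
    (l₁ m₁ l₂ m₂ : Finset V) (h₁ : P.OppPair l₁ m₁) (h₂ : P.OppPair l₂ m₂)
    (hdist : ({l₁, m₁} : Finset (Finset V)) ≠ {l₂, m₂})
    (honlytwo : ∀ l m : Finset V, P.OppPair l m →
      ({l, m} : Finset (Finset V)) = {l₁, m₁} ∨ ({l, m} : Finset (Finset V)) = {l₂, m₂}) :
    ∀ A B C : Finset V, A = l₁ ∪ m₁ → B = l₂ ∪ m₂ → C = Finset.univ \ (A ∪ B) →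
      (P.lines.filter (fun t => (t ∩ A).card = 1 ∧ (t ∩ B).card = 1 ∧ (t ∩ C).card = 1)).card
        = 36 ∧
      (P.lines.filter (fun t => (t ∩ A).card = 1 ∧ (t ∩ C).card = 2)).card
        = (P.lines.filter (fun t => (t ∩ B).card = 1 ∧ (t ∩ C).card = 2)).card ∧
      (P.lines.filter (fun t => (t ∩ A).card = 1 ∧ (t ∩ C).card = 2)).card + 42 = 6 * r ∧
      3 * (P.lines.filter (fun t => t ⊆ C)).card + 32 * r = 2 * r ^ 2 + 132 := by
  intro A B C hA hB hC
  have hcl1 : l₁.card = 3 := P.uniform _ h₁.1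
  have hcm1 : m₁.card = 3 := P.uniform _ h₁.2.1
  have hcl2 : l₂.card = 3 := P.uniform _ h₂.1
  have hcm2 : m₂.card = 3 := P.uniform _ h₂.2.1
  have hd1 : Disjoint l₁ m₁ := oppPair_disjoint_self h₁
  have hd2 : Disjoint l₂ m₂ := oppPair_disjoint_self h₂
  have hdAB : Disjoint A B := by rw [hA, hB]; exact oppPair_disjoint h₁ h₂ hdist
  have hA6 : A.card = 6 := by
    rw [hA, Finset.card_union_of_disjoint hd1, hcl1, hcm1]
  have hB6 : B.card = 6 := by
    rw [hB, Finset.card_union_of_disjoint hd2, hcl2, hcm2]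
  -- classification of lines by intersection with A
  have classA : ∀ t ∈ P.lines, (t ∩ A).card ≤ 1 ∨
      ((t ∩ A).card = 3 ∧ (t ∩ B).card = 0 ∧ (t = l₁ ∨ t = m₁)) := by
    intro t ht
    by_cases h2le : 2 ≤ (t ∩ A).card
    · right
      obtain ⟨x, hx, y, hy, hxy⟩ := Finset.one_lt_card.1 h2le
      have hx' := Finset.mem_inter.1 hx
      have hy' := Finset.mem_inter.1 hy
      have heq : t = l₁ ∨ t = m₁ :=
        two_points_line h₁ ht hxy hx'.1 hy'.1 (hA ▸ hx'.2) (hA ▸ hy'.2)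
      have htA : t ⊆ A := by
        rcases heq with rfl | rfl
        · rw [hA]; exact Finset.subset_union_left
        · rw [hA]; exact Finset.subset_union_right
      refine ⟨?_, ?_, heq⟩
      · rw [Finset.inter_eq_left.2 htA, P.uniform t ht]
      · rw [Finset.card_eq_zero, ← Finset.disjoint_iff_inter_eq_empty]
        exact hdAB.mono_left htA
    · left; omega
  have classB : ∀ t ∈ P.lines, (t ∩ B).card ≤ 1 ∨
      ((t ∩ B).card = 3 ∧ (t ∩ A).card = 0 ∧ (t = l₂ ∨ t = m₂)) := by
    intro t ht
    by_cases h2le : 2 ≤ (t ∩ B).card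
    · right
      obtain ⟨x, hx, y, hy, hxy⟩ := Finset.one_lt_card.1 h2le
      have hx' := Finset.mem_inter.1 hx
      have hy' := Finset.mem_inter.1 hy
      have heq : t = l₂ ∨ t = m₂ :=
        two_points_line h₂ ht hxy hx'.1 hy'.1 (hB ▸ hx'.2) (hB ▸ hy'.2)
      have htB : t ⊆ B := by
        rcases heq with rfl | rfl
        · rw [hB]; exact Finset.subset_union_left
        · rw [hB]; exact Finset.subset_union_right
      refine ⟨?_, ?_, heq⟩
      · rw [Finset.inter_eq_left.2 htB, P.uniform t ht]
      · rw [Finset.card_eq_zero, ← Finset.disjoint_iff_inter_eq_empty]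
        exact (hdAB.symm.mono_left htB).symm.symm
    · left; omega
  -- the intersection cards sum to 3
  have hsum3 : ∀ t ∈ P.lines, (t ∩ A).card + (t ∩ B).card + (t ∩ C).card = 3 := by
    intro t ht
    have hC' : t ∩ C = t \ (A ∪ B) := by
      rw [hC]; ext z
      simp only [Finset.mem_inter, Finset.mem_sdiff, Finset.mem_univ, true_and]
    have h1 : (t ∩ A).card + (t ∩ B).card = (t ∩ (A ∪ B)).card := by
      rw [Finset.inter_union_distrib_left,
        Finset.card_union_of_disjoint
          (hdAB.mono Finset.inter_subset_right Finset.inter_subset_right)]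
    have h2 : (t ∩ (A ∪ B)).card + (t \ (A ∪ B)).card = t.card :=
      Finset.card_inter_add_card_sdiff t (A ∪ B)
    have h3 : t.card = 3 := P.uniform t ht
    rw [hC']; omega
  -- subset of C characterisation
  have hsubC : ∀ t ∈ P.lines, (t ⊆ C ↔ ((t ∩ A).card = 0 ∧ (t ∩ B).card = 0)) := by
    intro t ht
    constructor
    · intro h
      have hdC : Disjoint C (A ∪ B) := by rw [hC]; exact Finset.sdiff_disjoint
      constructor <;> rw [Finset.card_eq_zero, ← Finset.disjoint_iff_inter_eq_empty]
      · exact ((hdC.mono_left h).mono_right Finset.subset_union_left).symm.symm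
      · exact ((hdC.mono_left h).mono_right Finset.subset_union_right).symm.symm
    · rintro ⟨ha, hb⟩ z hz
      rw [hC, Finset.mem_sdiff]
      refine ⟨Finset.mem_univ z, fun hzc => ?_⟩
      rcases Finset.mem_union.1 hzc with h | h
      · exact absurd (Finset.card_eq_zero.1 ha) (Finset.nonempty_iff_ne_empty.1
          ⟨z, Finset.mem_inter.2 ⟨hz, h⟩⟩)
      · exact absurd (Finset.card_eq_zero.1 hb) (Finset.nonempty_iff_ne_empty.1
          ⟨z, Finset.mem_inter.2 ⟨hz, h⟩⟩)
  -- the lines meeting A in 3 points are exactly l₁, m₁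
  have hfilter3A : P.lines.filter (fun t => (t ∩ A).card = 3) = {l₁, m₁} := by
    ext t
    simp only [Finset.mem_filter, Finset.mem_insert, Finset.mem_singleton]
    constructor
    · rintro ⟨ht, h3⟩
      rcases classA t ht with h | h
      · omega
      · exact h.2.2
    · rintro (rfl | rfl)
      · exact ⟨h₁.1, by rw [Finset.inter_eq_left.2 (hA ▸ Finset.subset_union_left), hcl1]⟩
      · exact ⟨h₁.2.1, by rw [Finset.inter_eq_left.2 (hA ▸ Finset.subset_union_right), hcm1]⟩
  have hfilter3B : P.lines.filter (fun t => (t ∩ B).card = 3) = {l₂, m₂} := by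
    ext t
    simp only [Finset.mem_filter, Finset.mem_insert, Finset.mem_singleton]
    constructor
    · rintro ⟨ht, h3⟩
      rcases classB t ht with h | h
      · omega
      · exact h.2.2
    · rintro (rfl | rfl)
      · exact ⟨h₂.1, by rw [Finset.inter_eq_left.2 (hB ▸ Finset.subset_union_left), hcl2]⟩
      · exact ⟨h₂.2.1, by rw [Finset.inter_eq_left.2 (hB ▸ Finset.subset_union_right), hcm2]⟩
  have hcard3A : (P.lines.filter (fun t => (t ∩ A).card = 3)).card = 2 := by
    rw [hfilter3A, Finset.card_pair h₁.2.2.1]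
  have hcard3B : (P.lines.filter (fun t => (t ∩ B).card = 3)).card = 2 := by
    rw [hfilter3B, Finset.card_pair h₂.2.2.1]
  -- double counting equations
  have e1 : ∑ t ∈ P.lines, (t ∩ A).card = 6 * r := by rw [sum_inter_card, hA6]
  have e2 : ∑ t ∈ P.lines, (t ∩ B).card = 6 * r := by rw [sum_inter_card, hB6]
  have epair : ∀ a ∈ A, ∀ b ∈ B, (P.lines.filter (fun t => a ∈ t ∧ b ∈ t)).card = 1 := by
    intro a ha b hb
    have hba : b ≠ a := by
      intro h; exact Finset.disjoint_left.1 hdAB ha (h ▸ hb)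
    refine pair_card_one P hba ?_
    intro hbo
    have : b ∈ A := hA ▸ oppLine_subset h₁ (hA ▸ ha) hbo
    exact Finset.disjoint_left.1 hdAB this hb
  have e3 : ∑ t ∈ P.lines, (t ∩ A).card * (t ∩ B).card = 36 := by
    rw [sum_inter_mul P A B epair, hA6, hB6]
  have hl1ne : l₁.Nonempty := Finset.card_pos.1 (by omega)
  obtain ⟨x₀, _⟩ := hl1ne
  have eS : 3 * P.lines.card = (2 * r + 4) * r := by
    have h1 : ∑ t ∈ P.lines, (t ∩ Finset.univ).card = (2 * r + 4) * r := by
      rw [sum_inter_card, card_univ_pent P x₀]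
    rw [← h1]
    have : ∀ t ∈ P.lines, (t ∩ Finset.univ).card = 3 := by
      intro t ht; rw [Finset.inter_univ]; exact P.uniform t ht
    rw [Finset.sum_congr rfl this, Finset.sum_const, smul_eq_mul, mul_comm]
  -- numeric classification facts
  have ha' : ∀ t ∈ P.lines, (t ∩ A).card = 0 ∨ (t ∩ A).card = 1 ∨
      ((t ∩ A).card = 3 ∧ (t ∩ B).card = 0) := by
    intro t ht; rcases classA t ht with h | ⟨g1, g2, _⟩ <;> omega
  have hb' : ∀ t ∈ P.lines, (t ∩ B).card = 0 ∨ (t ∩ B).card = 1 ∨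
      ((t ∩ B).card = 3 ∧ (t ∩ A).card = 0) := by
    intro t ht; rcases classB t ht with h | ⟨g1, g2, _⟩ <;> omega
  -- pointwise identities
  have dX : ∀ t ∈ P.lines, (t ∩ A).card * (t ∩ B).card =
      (if (t ∩ A).card = 1 ∧ (t ∩ B).card = 1 ∧ (t ∩ C).card = 1 then 1 else 0) := by
    intro t ht
    have h3 := hsum3 t ht
    rcases ha' t ht with h | h | ⟨h, h'⟩ <;> rcases hb' t ht with g | g | ⟨g, g'⟩ <;>
      rw [h, g] <;> split_ifs <;> omega
  have dA : ∀ t ∈ P.lines, (t ∩ A).card =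
      3 * (if (t ∩ A).card = 3 then 1 else 0) +
      ((if (t ∩ A).card = 1 ∧ (t ∩ B).card = 1 ∧ (t ∩ C).card = 1 then 1 else 0) +
       (if (t ∩ A).card = 1 ∧ (t ∩ C).card = 2 then 1 else 0)) := by
    intro t ht
    have h3 := hsum3 t ht
    have h4 := ha' t ht
    have h5 := hb' t ht
    split_ifs <;> omega
  have dB : ∀ t ∈ P.lines, (t ∩ B).card =
      3 * (if (t ∩ B).card = 3 then 1 else 0) +
      ((if (t ∩ A).card = 1 ∧ (t ∩ B).card = 1 ∧ (t ∩ C).card = 1 then 1 else 0) +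
       (if (t ∩ B).card = 1 ∧ (t ∩ C).card = 2 then 1 else 0)) := by
    intro t ht
    have h3 := hsum3 t ht
    have h4 := ha' t ht
    have h5 := hb' t ht
    split_ifs <;> omega
  have dOne : ∀ t ∈ P.lines, 1 =
      (if (t ∩ A).card = 3 then 1 else 0) +
      ((if (t ∩ B).card = 3 then 1 else 0) +
      ((if (t ∩ A).card = 1 ∧ (t ∩ B).card = 1 ∧ (t ∩ C).card = 1 then 1 else 0) +
      ((if (t ∩ A).card = 1 ∧ (t ∩ C).card = 2 then 1 else 0) +
      ((if (t ∩ B).card = 1 ∧ (t ∩ C).card = 2 then 1 else 0) +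
       (if t ⊆ C then 1 else 0))))) := by
    intro t ht
    have h3 := hsum3 t ht
    have h4 := ha' t ht
    have h5 := hb' t ht
    have h6 : (if t ⊆ C then (1:ℕ) else 0) =
        (if (t ∩ A).card = 0 ∧ (t ∩ B).card = 0 then 1 else 0) := by
      have := hsubC t ht
      split_ifs <;> tauto
    rw [h6]
    split_ifs <;> omega
  -- summed equations
  have EX : (P.lines.filter (fun t =>
      (t ∩ A).card = 1 ∧ (t ∩ B).card = 1 ∧ (t ∩ C).card = 1)).card = 36 := by
    rw [Finset.card_filter, ← Finset.sum_congr rfl dX, e3]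
  have EA : ∑ t ∈ P.lines, (t ∩ A).card =
      3 * (P.lines.filter (fun t => (t ∩ A).card = 3)).card +
      ((P.lines.filter (fun t =>
        (t ∩ A).card = 1 ∧ (t ∩ B).card = 1 ∧ (t ∩ C).card = 1)).card +
       (P.lines.filter (fun t => (t ∩ A).card = 1 ∧ (t ∩ C).card = 2)).card) := by
    rw [Finset.card_filter, Finset.card_filter, Finset.card_filter,
      Finset.mul_sum, ← Finset.sum_add_distrib, ← Finset.sum_add_distrib]
    exact Finset.sum_congr rfl dA
  have EB : ∑ t ∈ P.lines, (t ∩ B).card =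
      3 * (P.lines.filter (fun t => (t ∩ B).card = 3)).card +
      ((P.lines.filter (fun t =>
        (t ∩ A).card = 1 ∧ (t ∩ B).card = 1 ∧ (t ∩ C).card = 1)).card +
       (P.lines.filter (fun t => (t ∩ B).card = 1 ∧ (t ∩ C).card = 2)).card) := by
    rw [Finset.card_filter, Finset.card_filter, Finset.card_filter,
      Finset.mul_sum, ← Finset.sum_add_distrib, ← Finset.sum_add_distrib]
    exact Finset.sum_congr rfl dB
  have EC : P.lines.card =
      (P.lines.filter (fun t => (t ∩ A).card = 3)).card +
      ((P.lines.filter (fun t => (t ∩ B).card = 3)).card +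
      ((P.lines.filter (fun t =>
        (t ∩ A).card = 1 ∧ (t ∩ B).card = 1 ∧ (t ∩ C).card = 1)).card +
      ((P.lines.filter (fun t => (t ∩ A).card = 1 ∧ (t ∩ C).card = 2)).card +
      ((P.lines.filter (fun t => (t ∩ B).card = 1 ∧ (t ∩ C).card = 2)).card +
       (P.lines.filter (fun t => t ⊆ C)).card)))) := by
    have h0 : P.lines.card = ∑ _t ∈ P.lines, 1 := by
      rw [Finset.sum_const, smul_eq_mul, mul_one]
    rw [h0, Finset.card_filter, Finset.card_filter, Finset.card_filter,
      Finset.card_filter, Finset.card_filter, Finset.card_filter,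
      ← Finset.sum_add_distrib, ← Finset.sum_add_distrib, ← Finset.sum_add_distrib,
      ← Finset.sum_add_distrib, ← Finset.sum_add_distrib]
    exact Finset.sum_congr rfl dOne
  refine ⟨EX, by omega, by omega, ?_⟩
  have hrr : (2 * r + 4) * r = 2 * r ^ 2 + 4 * r := by ring
  rw [hrr] at eS
  linarith [eS, EA, EB, EX, EC, e1, e2, hcard3A, hcard3B]
end
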